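/- Assume 0 < y*_int ≤ y*_p. Then every solution y of the reduced hybrid SIS dynamics with y(0) ∈ (0,1] converges monotonically to y*_p: the function t ↦ |y(t) − y*_p| is nonincreasing and y(t) → y*_p as t → ∞. -/

import Mathlib

/-!
Write `b = αβ_p`, so that `y*_p = 1 - γ/b` and the dynamics above the threshold are
`y' = -b y (y - y*_p)`. Below the threshold, and on it, the actual speed only exceeds this
value, and there `y ≤ y*_int ≤ y*_p`; hence at every time `(y - y*_p) y' ≤ -b y (y - y*_p)²`.
As `y ≥ 0`, the distance `|y - y*_p|` is nonincreasing. Then `y` cannot cross `y*_p`, so it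
stays above `m = min (y 0) y*_p > 0`, and the same inequality gives exponential decay
`|y t - y*_p| ≤ |y 0 - y*_p| e^{-b m t}`.
-/

/-- A solution of the reduced hybrid SIS dynamics obtained under timescale
separation: a differentiable y : [0,∞) → [0,1] following the dynamics with
β = β_p below the threshold y*_int = c_P/(L(1−α)β_p), β = αβ_p above it, and a
convex combination (parametrized by z ∈ [0,1]) at the threshold. -/
def IsReducedSISSol (βp α γ cP L : ℝ) (y : ℝ → ℝ) : Prop :=
  (∀ t ≥ (0:ℝ), y t ∈ Set.Icc (0:ℝ) 1) ∧
  ∀ t ≥ (0:ℝ),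
    (y t < cP / (L * (1 - α) * βp) →
      HasDerivAt y (((1 - y t) * βp - γ) * y t) t) ∧
    (cP / (L * (1 - α) * βp) < y t →
      HasDerivAt y (((1 - y t) * (α * βp) - γ) * y t) t) ∧
    (y t = cP / (L * (1 - α) * βp) → ∃ z ∈ Set.Icc (0:ℝ) 1,
      HasDerivAt y
        (((1 - cP / (L * (1 - α) * βp)) * (z + α * (1 - z)) * βp - γ) *
          (cP / (L * (1 - α) * βp))) t)

open Set Filter Topology Real

section DifferentialInequality

variable {y c : ℝ → ℝ} {p κ a : ℝ}

theorem abs_sub_le_mul_exp_of_hasDerivAt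
    (hy : ∀ s ≥ a, ∃ d, HasDerivAt y d s ∧ (y s - p) * d ≤ -c s * (y s - p) ^ 2)
    (hκ : ∀ s ≥ a, κ ≤ c s) {t : ℝ} (ht : a ≤ t) :
    |y t - p| ≤ |y a - p| * exp (-κ * (t - a)) := by
  choose! d hd hineq using hy
  set g : ℝ → ℝ := fun s => exp (2 * κ * (s - a)) * (y s - p) ^ 2
  have hg : ∀ s ≥ a, HasDerivAt g
      (exp (2 * κ * (s - a)) * (2 * κ) * (y s - p) ^ 2
        + exp (2 * κ * (s - a)) * (2 * (y s - p) * d s)) s := fun s hs => by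
    have hexp := ((((hasDerivAt_id s).sub_const a).const_mul (2 * κ)).exp)
    have hsq := ((hd s hs).sub_const p).pow 2
    refine (hexp.mul hsq).congr_deriv ?_
    simp only [id, mul_one, Pi.pow_apply]
    ring
  have hg_anti : AntitoneOn g (Ici a) := by
    refine antitoneOn_of_hasDerivWithinAt_nonpos (convex_Ici a)
      (fun s hs => (hg s hs).continuousAt.continuousWithinAt)
      (fun s hs => (hg s (interior_subset hs)).hasDerivWithinAt) fun s hs => ?_
    have hs : a ≤ s := interior_subset hs
    have hdecay : 2 * κ * (y s - p) ^ 2 + 2 * ((y s - p) * d s) ≤ 0 := by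
      nlinarith [hineq s hs, hκ s hs, sq_nonneg (y s - p)]
    nlinarith [exp_pos (2 * κ * (s - a))]
  have hsq : (y t - p) ^ 2 ≤ ((y a - p) * exp (-κ * (t - a))) ^ 2 :=
    calc (y t - p) ^ 2 = exp (-(2 * κ * (t - a))) * g t := by
          rw [← mul_assoc, ← exp_add, neg_add_cancel, exp_zero, one_mul]
      _ ≤ exp (-(2 * κ * (t - a))) * g a := by gcongr; exact hg_anti self_mem_Ici ht ht
      _ = ((y a - p) * exp (-κ * (t - a))) ^ 2 := by
          simp only [g, sub_self, mul_zero, exp_zero, one_mul, mul_pow, sq (exp _), ← exp_add]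
          ring_nf
  simpa [abs_mul, abs_of_pos (exp_pos _)] using sq_le_sq.1 hsq

theorem antitoneOn_abs_sub_of_hasDerivAt
    (hy : ∀ s ≥ a, ∃ d, HasDerivAt y d s ∧ (y s - p) * d ≤ -c s * (y s - p) ^ 2)
    (hc : ∀ s ≥ a, 0 ≤ c s) :
    AntitoneOn (fun t => |y t - p|) (Ici a) := fun s hs t _ hst => by
  simpa using abs_sub_le_mul_exp_of_hasDerivAt (κ := 0)
    (fun r hr => hy r (le_trans hs hr)) (fun r hr => hc r (le_trans hs hr)) hst

theorem tendsto_of_hasDerivAt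
    (hy : ∀ s ≥ a, ∃ d, HasDerivAt y d s ∧ (y s - p) * d ≤ -c s * (y s - p) ^ 2)
    (hκ_pos : 0 < κ) (hκ : ∀ s ≥ a, κ ≤ c s) :
    Tendsto y atTop (𝓝 p) := by
  rw [tendsto_iff_norm_sub_tendsto_zero]
  have hexp : Tendsto (fun t => |y a - p| * exp (-κ * (t - a))) atTop (𝓝 0) := by
    have h : Tendsto (fun t => κ * (t - a)) atTop atTop :=
      (tendsto_atTop_add_const_right _ _ tendsto_id).const_mul_atTop hκ_pos
    simpa [neg_mul] using (tendsto_exp_neg_atTop_nhds_zero.comp h).const_mul |y a - p|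
  refine squeeze_zero' (Eventually.of_forall fun t => norm_nonneg _) ?_ hexp
  filter_upwards [eventually_ge_atTop a] with t ht
  exact abs_sub_le_mul_exp_of_hasDerivAt hy hκ ht

theorem min_le_of_antitoneOn_abs_sub (hcont : ContinuousOn y (Ici a))
    (hanti : AntitoneOn (fun t => |y t - p|) (Ici a)) {t : ℝ} (ht : a ≤ t) :
    min (y a) p ≤ y t := by
  have hdist : |y t - p| ≤ |y a - p| := hanti self_mem_Ici ht ht
  rcases le_or_gt (y a) p with hle | hlt
  · rw [abs_of_nonpos (sub_nonpos.2 hle)] at hdist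
    exact (min_le_left _ _).trans (by linarith [neg_abs_le (y t - p)])
  · refine (min_le_right _ _).trans (not_lt.1 fun hyt => ?_)
    obtain ⟨s, hs, hys⟩ : ∃ s ∈ Icc a t, y s = p :=
      intermediate_value_Icc' ht (hcont.mono Icc_subset_Ici_self) ⟨hyt.le, hlt.le⟩
    have h := hanti hs.1 (le_trans hs.1 hs.2) hs.2
    simp only [hys, sub_self, abs_zero] at h
    linarith [abs_nonpos_iff.1 h]

end DifferentialInequality

theorem IsReducedSISSol.exists_hasDerivAt_mul_le {βp α γ cP L : ℝ} {y : ℝ → ℝ}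
    (hsol : IsReducedSISSol βp α γ cP L y) (hβp : 0 ≤ βp) (hα : α ≤ 1) (hb : α * βp ≠ 0)
    (hyint_le : cP / (L * (1 - α) * βp) ≤ 1 - γ / (α * βp)) {t : ℝ} (ht : 0 ≤ t) :
    ∃ d, HasDerivAt y d t ∧
      (y t - (1 - γ / (α * βp))) * d ≤ -(α * βp * y t) * (y t - (1 - γ / (α * βp))) ^ 2 := by
  obtain ⟨hrange, hdyn⟩ := hsol
  obtain ⟨hy0, hy1⟩ := hrange t ht
  obtain ⟨hbelow, habove, hat⟩ := hdyn t ht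
  set c := cP / (L * (1 - α) * βp)
  set p := 1 - γ / (α * βp)
  have hfield : ∀ u, -(α * βp * u) * (u - p) = ((1 - u) * (α * βp) - γ) * u := fun u => by
    have : α * βp * (γ / (α * βp)) = γ := mul_div_cancel₀ γ hb
    simp only [p]
    linear_combination -u * this
  have hfaster : ∀ d, y t ≤ p → ((1 - y t) * (α * βp) - γ) * y t ≤ d →
      (y t - p) * d ≤ -(α * βp * y t) * (y t - p) ^ 2 := fun d hyp hd => by
    have h := mul_le_mul_of_nonpos_left hd (sub_nonpos.2 hyp)
    rw [← hfield] at h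
    linarith
  rcases lt_trichotomy (y t) c with hlt | heq | hgt
  · refine ⟨_, hbelow hlt, hfaster _ (hlt.le.trans hyint_le) ?_⟩
    have : (1 - y t) * (α * βp) ≤ (1 - y t) * βp := by nlinarith [mul_nonneg (sub_nonneg.2 hy1) hβp]
    nlinarith
  · obtain ⟨z, ⟨hz0, -⟩, hd⟩ := hat heq
    refine ⟨_, hd, hfaster _ (heq.le.trans hyint_le) ?_⟩
    rw [heq] at hy0 hy1 ⊢
    have : (1 - c) * (α * βp) ≤ (1 - c) * (z + α * (1 - z)) * βp := by
      nlinarith [mul_nonneg (mul_nonneg (mul_nonneg (sub_nonneg.2 hy1) hβp) hz0) (sub_nonneg.2 hα)]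
    nlinarith
  · refine ⟨_, habove hgt, le_of_eq ?_⟩
    rw [← hfield]
    ring

theorem reduced_sis_converges_to_yp_general
    (βp α γ cP L : ℝ)
    (hβp : βp > 0) (hα : α ∈ Set.Ioo (0:ℝ) 1)
    (hyint_pos : 0 < cP / (L * (1 - α) * βp))
    (hyint_le : cP / (L * (1 - α) * βp) ≤ 1 - γ / (α * βp))
    (y : ℝ → ℝ) (hsol : IsReducedSISSol βp α γ cP L y) (hy0 : y 0 ∈ Set.Ioc (0:ℝ) 1) :
    AntitoneOn (fun t => |y t - (1 - γ / (α * βp))|) (Set.Ici 0) ∧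
    Filter.Tendsto y Filter.atTop (nhds (1 - γ / (α * βp))) := by
  have hb : 0 < α * βp := mul_pos hα.1 hβp
  have hderiv := fun t (ht : t ≥ 0) =>
    hsol.exists_hasDerivAt_mul_le hβp.le hα.2.le hb.ne' hyint_le ht
  have hcont : ContinuousOn y (Ici 0) := fun t ht => by
    obtain ⟨d, hd, -⟩ := hderiv t ht
    exact hd.continuousAt.continuousWithinAt
  have hanti := antitoneOn_abs_sub_of_hasDerivAt hderiv
    fun s hs => mul_nonneg hb.le (hsol.1 s hs).1
  have hm : 0 < min (y 0) (1 - γ / (α * βp)) := lt_min hy0.1 (hyint_pos.trans_le hyint_le)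
  exact ⟨hanti, tendsto_of_hasDerivAt hderiv (mul_pos hb hm)
    fun s hs => mul_le_mul_of_nonneg_left (min_le_of_antitoneOn_abs_sub hcont hanti hs) hb.le⟩

/-- If 0 < y*_int ≤ y*_p, every solution of the reduced hybrid SIS
dynamics with y(0) ∈ (0,1] converges monotonically (in the sense that
|y(t) − y*_p| is nonincreasing) to y*_p = 1 − γ/(αβ_p). -/
theorem reduced_sis_converges_to_yp
    (βp α γ cP L : ℝ)
    (hβp : βp > 0) (hα : α ∈ Set.Ioo (0:ℝ) 1) (hγ : γ > 0) (hcP : cP > 0) (hL : L > 0)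
    (hyint_pos : 0 < cP / (L * (1 - α) * βp))
    (hyint_le : cP / (L * (1 - α) * βp) ≤ 1 - γ / (α * βp))
    (y : ℝ → ℝ) (hsol : IsReducedSISSol βp α γ cP L y) (hy0 : y 0 ∈ Set.Ioc (0:ℝ) 1) :
    AntitoneOn (fun t => |y t - (1 - γ / (α * βp))|) (Set.Ici 0) ∧
    Filter.Tendsto y Filter.atTop (nhds (1 - γ / (α * βp))) :=
  reduced_sis_converges_to_yp_general βp α γ cP L hβp hα hyint_pos hyint_le y hsol hy0
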